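/- arXiv:2507.14631 — 3 statements merged into one kernel-verified Lean document; each statement's English description precedes it below -/
import Mathlib

section
/- Let n ≥ 1, d ≥ 2 and k ∈ {1,…,d−1} be integers, let p₁,…,pₙ ∈ ℝ^d, and let V ∈ ℝ^{d×d} be an orthogonal matrix (VᵀV = I_d). Let D ∈ ℝ^{d×d} be diagonal with diagonal entries in [0,1] summing to d−k. Let q ∈ ℝ^d have entries q_j := ∑_{i=1}^n |(V pᵢ)_j|, let Ind ⊆ {1,…,d} be a set of indices of d−k smallest entries of q, and let ζ ∈ {0,1}^d satisfy ζ_j = 1 iff j ∈ Ind. Then ∑_{i=1}^n ‖diag(ζ) V pᵢ‖₂ ≤ √d · ∑_{i=1}^n ‖D V pᵢ‖₂. -/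
open Matrix

/-- The Euclidean (ℓ₂) norm of a vector in ℝ^d. -/
noncomputable def l2norm {d : ℕ} (u : Fin d → ℝ) : ℝ := Real.sqrt (∑ j, (u j) ^ 2)

/-- With `V` orthogonal, `D` diagonal with diagonal entries in `[0,1]`
summing to `d - k`, `qⱼ := ∑ᵢ |(V pᵢ)ⱼ|`, and `ζ` the indicator of a set of indices of
the `d - k` smallest entries of `q`, one has
`∑ᵢ ‖diag(ζ) V pᵢ‖₂ ≤ √d · ∑ᵢ ‖D V pᵢ‖₂`. -/
theorem stmt_4 (n d k : ℕ) (hn : 1 ≤ n) (hd : 2 ≤ d) (hk1 : 1 ≤ k) (hk2 : k ≤ d - 1)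
    (p : Fin n → Fin d → ℝ) (V : Matrix (Fin d) (Fin d) ℝ) (hV : Vᵀ * V = 1)
    (D : Matrix (Fin d) (Fin d) ℝ) (hDdiag : D = Matrix.diagonal (fun j => D j j))
    (hD01 : ∀ j, 0 ≤ D j j ∧ D j j ≤ 1) (hDsum : ∑ j, D j j = ((d - k : ℕ) : ℝ))
    (q : Fin d → ℝ) (hq : ∀ j, q j = ∑ i, |V.mulVec (p i) j|)
    (Ind : Finset (Fin d)) (hcard : Ind.card = d - k)
    (hmin : ∀ j ∈ Ind, ∀ j' ∉ Ind, q j ≤ q j')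
    (ζ : Fin d → ℝ) (hζ : ∀ j : Fin d, ζ j = if j ∈ Ind then 1 else 0) :
    ∑ i, l2norm ((Matrix.diagonal ζ).mulVec (V.mulVec (p i)))
      ≤ Real.sqrt d * ∑ i, l2norm (D.mulVec (V.mulVec (p i))) := by
  set y : Fin n → Fin d → ℝ := fun i => V.mulVec (p i) with hy
  show ∑ i, l2norm ((Matrix.diagonal ζ).mulVec (y i))
      ≤ Real.sqrt d * ∑ i, l2norm (D.mulVec (y i))
  -- Step A: LHS ≤ ∑ j ∈ Ind, q j
  have stepA : ∑ i, l2norm ((Matrix.diagonal ζ).mulVec (y i)) ≤ ∑ j ∈ Ind, q j := by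
    have h1 : ∀ i, l2norm ((Matrix.diagonal ζ).mulVec (y i)) ≤ ∑ j ∈ Ind, |y i j| := by
      intro i
      have hpt : ∀ j, ((Matrix.diagonal ζ).mulVec (y i) j) ^ 2
          = if j ∈ Ind then |y i j| ^ 2 else 0 := by
        intro j
        rw [Matrix.mulVec_diagonal, hζ j]
        by_cases hj : j ∈ Ind <;> simp [hj, sq_abs]
      have heq : ∑ j, ((Matrix.diagonal ζ).mulVec (y i) j) ^ 2
          = ∑ j ∈ Ind, (|y i j|) ^ 2 := by
        rw [Finset.sum_congr rfl (fun j _ => hpt j), Finset.sum_ite_mem, Finset.univ_inter]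
      rw [l2norm, heq]
      have := Finset.sum_sq_le_sq_sum_of_nonneg (s := Ind) (f := fun j => |y i j|)
        (fun j _ => abs_nonneg _)
      calc Real.sqrt (∑ j ∈ Ind, |y i j| ^ 2) ≤ Real.sqrt ((∑ j ∈ Ind, |y i j|) ^ 2) :=
            Real.sqrt_le_sqrt this
        _ = ∑ j ∈ Ind, |y i j| := Real.sqrt_sq (Finset.sum_nonneg fun j _ => abs_nonneg _)
    calc ∑ i, l2norm ((Matrix.diagonal ζ).mulVec (y i)) ≤ ∑ i, ∑ j ∈ Ind, |y i j| :=
          Finset.sum_le_sum fun i _ => h1 i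
      _ = ∑ j ∈ Ind, q j := by rw [Finset.sum_comm]; exact Finset.sum_congr rfl fun j _ => (hq j).symm
  -- q nonneg
  have hq0 : ∀ j, 0 ≤ q j := fun j => (hq j) ▸ Finset.sum_nonneg fun i _ => abs_nonneg _
  -- Step B: ∑ j ∈ Ind, q j ≤ ∑ j, D j j * q j
  have stepB : ∑ j ∈ Ind, q j ≤ ∑ j, D j j * q j := by
    -- c = max of q over Ind; handle via sup'. Ind nonempty since d - k ≥ 1
    have hIndcard : 1 ≤ Ind.card := by
      rw [hcard]; omega
    have hne : Ind.Nonempty := Finset.card_pos.mp hIndcard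
    obtain ⟨c, hcmem, hcmax⟩ := Finset.exists_max_image Ind q hne
    set C := q c with hC
    have hle : ∀ j ∈ Ind, q j ≤ C := fun j hj => hcmax j hj
    have hge : ∀ j ∉ Ind, C ≤ q j := fun j hj => hmin c hcmem j hj
    have hC0 : 0 ≤ C := hq0 c
    have split : ∑ j, D j j * q j = ∑ j ∈ Ind, D j j * q j + ∑ j ∈ Indᶜ, D j j * q j := by
      rw [Finset.sum_add_sum_compl]
    have splitD : (∑ j, D j j) = ∑ j ∈ Ind, D j j + ∑ j ∈ Indᶜ, D j j := by
      rw [Finset.sum_add_sum_compl]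
    -- ∑_{Ind} (1 - D jj) q j ≤ C * ∑_{Ind} (1 - D jj) = C * ∑_{Indᶜ} D jj ≤ ∑_{Indᶜ} D jj q j
    have key1 : ∑ j ∈ Ind, (1 - D j j) * q j ≤ C * ∑ j ∈ Ind, (1 - D j j) := by
      rw [Finset.mul_sum]
      apply Finset.sum_le_sum
      intro j hj
      have := (hD01 j).2
      calc (1 - D j j) * q j ≤ (1 - D j j) * C :=
            mul_le_mul_of_nonneg_left (hle j hj) (by linarith)
        _ = C * (1 - D j j) := mul_comm _ _
    have key2 : ∑ j ∈ Ind, (1 - D j j) = ∑ j ∈ Indᶜ, D j j := by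
      have : ∑ j ∈ Ind, (1 - D j j) = Ind.card - ∑ j ∈ Ind, D j j := by
        rw [Finset.sum_sub_distrib, Finset.sum_const, nsmul_eq_mul, mul_one]
      rw [this, hcard]
      have := splitD
      rw [hDsum] at this
      linarith
    have key3 : C * ∑ j ∈ Indᶜ, D j j ≤ ∑ j ∈ Indᶜ, D j j * q j := by
      rw [Finset.mul_sum]
      apply Finset.sum_le_sum
      intro j hj
      rw [Finset.mem_compl] at hj
      have h0 := (hD01 j).1
      calc C * D j j = D j j * C := mul_comm _ _
        _ ≤ D j j * q j := mul_le_mul_of_nonneg_left (hge j hj) h0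
    have : ∑ j ∈ Ind, q j - ∑ j ∈ Ind, D j j * q j = ∑ j ∈ Ind, (1 - D j j) * q j := by
      rw [← Finset.sum_sub_distrib]
      exact Finset.sum_congr rfl fun j _ => by ring
    rw [split]
    linarith [key1, key2 ▸ key3]
  -- Step C: ∑ j, D j j * q j ≤ √d * RHS sum
  have stepC : ∑ j, D j j * q j ≤ Real.sqrt d * ∑ i, l2norm (D.mulVec (y i)) := by
    have h1 : ∑ j, D j j * q j = ∑ i, ∑ j, D j j * |y i j| := by
      rw [Finset.sum_comm]
      apply Finset.sum_congr rfl
      intro j _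
      rw [hq j, Finset.mul_sum]
    rw [h1, Finset.mul_sum]
    apply Finset.sum_le_sum
    intro i _
    have hmv : ∀ j, D.mulVec (y i) j = D j j * y i j := by
      intro j
      conv_lhs => rw [hDdiag]
      rw [Matrix.mulVec_diagonal]
    have hnn : ∀ j, 0 ≤ D j j * |y i j| := fun j => mul_nonneg (hD01 j).1 (abs_nonneg _)
    have sq1 : (∑ j, D j j * |y i j|) ^ 2 ≤ (d : ℝ) * ∑ j, (D.mulVec (y i) j) ^ 2 := by
      have := sq_sum_le_card_mul_sum_sq (s := Finset.univ) (f := fun j => D j j * |y i j|)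
      simp only [Finset.card_univ, Fintype.card_fin] at this
      calc (∑ j, D j j * |y i j|) ^ 2 ≤ (d : ℝ) * ∑ j, (D j j * |y i j|) ^ 2 := by
            exact_mod_cast this
        _ = (d : ℝ) * ∑ j, (D.mulVec (y i) j) ^ 2 := by
            congr 1
            apply Finset.sum_congr rfl
            intro j _
            rw [hmv j, mul_pow, mul_pow, sq_abs]
    have h2 : ∑ j, D j j * |y i j| ≤ Real.sqrt ((d : ℝ) * ∑ j, (D.mulVec (y i) j) ^ 2) := by
      rw [← Real.sqrt_sq (Finset.sum_nonneg fun j _ => hnn j)]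
      exact Real.sqrt_le_sqrt sq1
    rw [Real.sqrt_mul (by positivity)] at h2
    exact h2
  calc ∑ i, l2norm ((Matrix.diagonal ζ).mulVec (y i)) ≤ ∑ j ∈ Ind, q j := stepA
    _ ≤ ∑ j, D j j * q j := stepB
    _ ≤ Real.sqrt d * ∑ i, l2norm (D.mulVec (y i)) := stepC
end

section
/- Let n ≥ 1, d ≥ 2 and k ∈ {1,…,d−1} be integers and let p₁,…,pₙ ∈ ℝ^d. Let X* ∈ ℝ^{d×d} be symmetric with trace(X*) = d−k and 0 ⪯ X* ⪯ I_d, such that (X*, (‖X* pᵢ‖₂)_{i=1}^n) attains the infimum relaxksm(P,k) of the relaxed problem. Let X* = Vᵀ D V be a spectral decomposition with V orthogonal and D diagonal, let q ∈ ℝ^d have entries q_j := ∑_{i=1}^n |(V pᵢ)_j|, let ζ ∈ {0,1}^d be the indicator vector of a set of indices of d−k smallest entries of q, and set E := Vᵀ diag(ζ) V. Then ∑_{i=1}^n ‖E pᵢ‖₂ ≤ √d · ksm(P,k). -/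
open Matrix

/-!
Write `uᵢ := V pᵢ`. Then `‖E pᵢ‖₂ = ‖ζ ⊙ uᵢ‖₂ ≤ ∑_{j ∈ Ind} |uᵢⱼ|`, while by Cauchy–Schwarz
`√d · ‖X* pᵢ‖₂ = √d · ‖D ⊙ uᵢ‖₂ ≥ ∑ⱼ Dⱼ |uᵢⱼ|`. Summing over `i` leaves `∑_{j ∈ Ind} qⱼ ≤ ∑ⱼ Dⱼ qⱼ`:
the constraints on `X*` give `0 ≤ D ≤ 1` and `∑ⱼ Dⱼ = d - k`, so `D` is a fractional choice of
`d - k` coordinates, and no such choice beats the `d - k` smallest entries of `q`. Finally every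
rank-`(d - k)` projection is feasible for the relaxation, so `relaxksm(P,k) ≤ ksm(P,k)`.
-/

open Finset

section Conjugation

variable {ι : Type*} [Fintype ι] [DecidableEq ι] {V : Matrix ι ι ℝ}

lemma conj_diagonal_mulVec (V : Matrix ι ι ℝ) (w x : ι → ℝ) :
    (Vᵀ * diagonal w * V) *ᵥ x = Vᵀ *ᵥ (w * V *ᵥ x) := by
  rw [← mulVec_mulVec, ← mulVec_mulVec]
  congr 1
  ext j
  exact mulVec_diagonal w _ j

lemma transpose_conj_diagonal (V : Matrix ι ι ℝ) (w : ι → ℝ) :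
    (Vᵀ * diagonal w * V)ᵀ = Vᵀ * diagonal w * V := by
  simp only [transpose_mul, transpose_transpose, diagonal_transpose, Matrix.mul_assoc]

lemma trace_conj_diagonal (hV : Vᵀ * V = 1) (w : ι → ℝ) :
    (Vᵀ * diagonal w * V).trace = ∑ j, w j := by
  rw [trace_mul_comm, ← Matrix.mul_assoc, mul_eq_one_comm.mp hV, Matrix.one_mul, trace_diagonal]

lemma isIdempotentElem_conj_diagonal (hV : Vᵀ * V = 1) {w : ι → ℝ} (hw : IsIdempotentElem w) :
    IsIdempotentElem (Vᵀ * diagonal w * V) := by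
  unfold IsIdempotentElem at *
  calc Vᵀ * diagonal w * V * (Vᵀ * diagonal w * V)
      = Vᵀ * diagonal w * (V * Vᵀ) * diagonal w * V := by simp only [Matrix.mul_assoc]
    _ = Vᵀ * diagonal w * V := by
      rw [mul_eq_one_comm.mp hV, Matrix.mul_one, Matrix.mul_assoc Vᵀ, diagonal_mul_diagonal,
        ← Pi.mul_def, hw]

lemma rank_conj_diagonal (hV : Vᵀ * V = 1) (w : ι → ℝ) :
    (Vᵀ * diagonal w * V).rank = Fintype.card {j // w j ≠ 0} := by
  have hunit : IsUnit V.det := IsUnit.of_mul_eq_one_right _ (by rw [← det_mul, hV, det_one])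
  have hunit' : IsUnit Vᵀ.det := by rwa [det_transpose]
  rw [rank_mul_eq_left_of_isUnit_det V _ hunit, rank_mul_eq_right_of_isUnit_det Vᵀ _ hunit',
    rank_diagonal]

lemma nonneg_of_posSemidef_conj_diagonal (hV : Vᵀ * V = 1) {w : ι → ℝ}
    (h : (Vᵀ * diagonal w * V).PosSemidef) (j : ι) : 0 ≤ w j := by
  have h' := h.mul_mul_conjTranspose_same V
  rw [conjTranspose_eq_transpose_of_trivial, ← Matrix.mul_assoc, ← Matrix.mul_assoc,
    mul_eq_one_comm.mp hV, Matrix.one_mul, Matrix.mul_assoc, mul_eq_one_comm.mp hV,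
    Matrix.mul_one] at h'
  exact posSemidef_diagonal_iff.mp h' j

lemma le_one_of_posSemidef_one_sub_conj_diagonal (hV : Vᵀ * V = 1) {w : ι → ℝ}
    (h : (1 - Vᵀ * diagonal w * V).PosSemidef) (j : ι) : w j ≤ 1 := by
  have hconj : 1 - Vᵀ * diagonal w * V = Vᵀ * diagonal (1 - w) * V := by
    have h1 : diagonal (1 - w) = 1 - diagonal w := by rw [← diagonal_one, diagonal_sub]; rfl
    rw [h1, Matrix.mul_sub, Matrix.sub_mul, Matrix.mul_one, hV]
  have hj := nonneg_of_posSemidef_conj_diagonal hV (hconj ▸ h) j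
  simpa using hj

end Conjugation

section EuclideanNorm

variable {d : ℕ} {V : Matrix (Fin d) (Fin d) ℝ}

lemma l2norm_transpose_mulVec (hV : Vᵀ * V = 1) (u : Fin d → ℝ) :
    l2norm (Vᵀ *ᵥ u) = l2norm u := by
  have hsq : ∀ v : Fin d → ℝ, ∑ j, v j ^ 2 = v ⬝ᵥ v := fun v => by simp [dotProduct, sq]
  rw [l2norm, l2norm, hsq, hsq, dotProduct_mulVec, vecMul_transpose, mulVec_mulVec,
    mul_eq_one_comm.mp hV, one_mulVec]

lemma l2norm_le_sum_abs (u : Fin d → ℝ) : l2norm u ≤ ∑ j, |u j| := by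
  rw [l2norm, Real.sqrt_le_left (sum_nonneg fun j _ => abs_nonneg _)]
  simpa only [sq_abs] using sum_sq_le_sq_sum_of_nonneg (s := univ) fun j _ => abs_nonneg (u j)

lemma sum_abs_le_sqrt_mul_l2norm (u : Fin d → ℝ) : ∑ j, |u j| ≤ √d * l2norm u := by
  rw [l2norm, ← Real.sqrt_mul (Nat.cast_nonneg d)]
  apply Real.le_sqrt_of_sq_le
  simpa only [sq_abs, card_univ, Fintype.card_fin] using
    sq_sum_le_card_mul_sum_sq (s := univ) (f := fun j => |u j|)

lemma l2norm_conj_diagonal_mulVec (hV : Vᵀ * V = 1) (w x : Fin d → ℝ) :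
    l2norm ((Vᵀ * diagonal w * V) *ᵥ x) = l2norm (w * V *ᵥ x) := by
  rw [conj_diagonal_mulVec, l2norm_transpose_mulVec hV]

lemma l2norm_conj_indicator_mulVec_le (hV : Vᵀ * V = 1) (s : Finset (Fin d)) (x : Fin d → ℝ) :
    l2norm ((Vᵀ * diagonal (fun j => if j ∈ s then 1 else 0) * V) *ᵥ x)
      ≤ ∑ j ∈ s, |(V *ᵥ x) j| := by
  rw [l2norm_conj_diagonal_mulVec hV]
  refine (l2norm_le_sum_abs _).trans_eq ?_
  simp [apply_ite, sum_ite_mem]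

lemma sum_mul_abs_le_sqrt_mul_l2norm_conj_diagonal (hV : Vᵀ * V = 1) {w : Fin d → ℝ}
    (hw : ∀ j, 0 ≤ w j) (x : Fin d → ℝ) :
    ∑ j, w j * |(V *ᵥ x) j| ≤ √d * l2norm ((Vᵀ * diagonal w * V) *ᵥ x) := by
  rw [l2norm_conj_diagonal_mulVec hV]
  convert sum_abs_le_sqrt_mul_l2norm (w * V *ᵥ x) using 2 with j
  simp [abs_mul, abs_of_nonneg (hw j)]

end EuclideanNorm

lemma sum_le_sum_mul_of_sum_eq_card {ι : Type*} [Fintype ι] [DecidableEq ι] {s : Finset ι}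
    {q w : ι → ℝ} (hw0 : ∀ j, 0 ≤ w j) (hw1 : ∀ j, w j ≤ 1) (hw : ∑ j, w j = #s)
    (hq : ∀ j ∈ s, ∀ j' ∉ s, q j ≤ q j') :
    ∑ j ∈ s, q j ≤ ∑ j, w j * q j := by
  rcases s.eq_empty_or_nonempty with rfl | hs
  · have hw_zero : ∀ j ∈ univ, w j = 0 :=
      (sum_eq_zero_iff_of_nonneg fun j _ => hw0 j).mp (by simpa using hw)
    simp [hw_zero]
  obtain ⟨t, ht, hqt⟩ := s.exists_max_image q hs
  have hin : ∑ j ∈ s, (1 - w j) * q j ≤ ∑ j ∈ s, (1 - w j) * q t :=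
    sum_le_sum fun j hj => mul_le_mul_of_nonneg_left (hqt j hj) (by linarith [hw1 j])
  have hout : ∑ j ∈ sᶜ, w j * q t ≤ ∑ j ∈ sᶜ, w j * q j :=
    sum_le_sum fun j hj => mul_le_mul_of_nonneg_left (hq t ht j (mem_compl.mp hj)) (hw0 j)
  have hmass : ∑ j ∈ s, (1 - w j) = ∑ j ∈ sᶜ, w j := by
    rw [sum_sub_distrib, sum_const, nsmul_one, ← hw, ← sum_add_sum_compl s w]
    ring
  calc ∑ j ∈ s, q j = ∑ j ∈ s, (1 - w j) * q j + ∑ j ∈ s, w j * q j := by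
        rw [← sum_add_distrib]; exact sum_congr rfl fun j _ => by ring
    _ ≤ ∑ j ∈ sᶜ, w j * q t + ∑ j ∈ s, w j * q j := by
        rw [← sum_mul, ← hmass, sum_mul]; gcongr
    _ ≤ ∑ j, w j * q j := by
        rw [← sum_add_sum_compl s]; linarith

section Relaxation

variable {ι : Type*} [Fintype ι]

lemma posSemidef_of_isIdempotentElem {X : Matrix ι ι ℝ} (hX : IsIdempotentElem X)
    (hXs : Xᵀ = X) : X.PosSemidef := by
  have hX' : X = Xᴴ * X := by rw [conjTranspose_eq_transpose_of_trivial, hXs, hX.eq]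
  exact hX' ▸ posSemidef_conjTranspose_mul_self X

variable [DecidableEq ι] in
lemma trace_eq_rank_of_isIdempotentElem {K : Type*} [Field K] {X : Matrix ι ι K}
    (hX : IsIdempotentElem X) : X.trace = X.rank := by
  have hX' : IsIdempotentElem (toLin' X) := hX.map toLinAlgEquiv'
  rw [← trace_toLin'_eq, ((LinearMap.isProj_range_iff_isIdempotentElem _).mpr hX').trace]
  rfl

variable {n d : ℕ}

/-- For `m = d - k`, `sInf (ksmValues p m)` is `ksm(P,k)` and `sInf (relaxksmValues p m)` is
`relaxksm(P,k)`. -/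
def ksmValues (p : Fin n → Fin d → ℝ) (m : ℕ) : Set ℝ :=
  {r | ∃ X : Matrix (Fin d) (Fin d) ℝ,
    X * X = X ∧ Xᵀ = X ∧ X.rank = m ∧ r = ∑ i, l2norm (X.mulVec (p i))}

def relaxksmValues (p : Fin n → Fin d → ℝ) (m : ℕ) : Set ℝ :=
  {r | ∃ (X : Matrix (Fin d) (Fin d) ℝ) (y : Fin n → ℝ),
    Xᵀ = X ∧ X.trace = (m : ℝ) ∧ X.PosSemidef ∧ (1 - X).PosSemidef ∧
    (∀ i, l2norm (X.mulVec (p i)) ≤ y i) ∧ r = ∑ i, y i}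

lemma ksmValues_subset_relaxksmValues (p : Fin n → Fin d → ℝ) (m : ℕ) :
    ksmValues p m ⊆ relaxksmValues p m := by
  rintro r ⟨X, hXX, hXs, hXr, rfl⟩
  have hX : IsIdempotentElem X := hXX
  refine ⟨X, _, hXs, by rw [trace_eq_rank_of_isIdempotentElem hX, hXr],
    posSemidef_of_isIdempotentElem hX hXs, posSemidef_of_isIdempotentElem hX.one_sub ?_,
    fun i => le_rfl, rfl⟩
  rw [transpose_sub, transpose_one, hXs]

lemma bddBelow_relaxksmValues (p : Fin n → Fin d → ℝ) (m : ℕ) :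
    BddBelow (relaxksmValues p m) := by
  refine ⟨0, ?_⟩
  rintro r ⟨X, y, -, -, -, -, hy, rfl⟩
  exact sum_nonneg fun i _ => (Real.sqrt_nonneg _).trans (hy i)

lemma sInf_relaxksmValues_le {p : Fin n → Fin d → ℝ} {m : ℕ} (h : (ksmValues p m).Nonempty) :
    sInf (relaxksmValues p m) ≤ sInf (ksmValues p m) :=
  csInf_le_csInf (bddBelow_relaxksmValues p m) h (ksmValues_subset_relaxksmValues p m)

end Relaxation

theorem stmt_7_general (n d k : ℕ)
    (p : Fin n → Fin d → ℝ)
    (Xstar : Matrix (Fin d) (Fin d) ℝ)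
    (htr : Xstar.trace = ((d - k : ℕ) : ℝ))
    (hpsd : Xstar.PosSemidef) (hpsd' : (1 - Xstar).PosSemidef)
    (hopt : ∑ i, l2norm (Xstar.mulVec (p i))
      = sInf {r : ℝ | ∃ (X : Matrix (Fin d) (Fin d) ℝ) (y : Fin n → ℝ),
          Xᵀ = X ∧ X.trace = ((d - k : ℕ) : ℝ) ∧ X.PosSemidef ∧ (1 - X).PosSemidef ∧
          (∀ i, l2norm (X.mulVec (p i)) ≤ y i) ∧ r = ∑ i, y i})
    (V : Matrix (Fin d) (Fin d) ℝ) (hV : Vᵀ * V = 1)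
    (Dvec : Fin d → ℝ) (hdecomp : Xstar = Vᵀ * Matrix.diagonal Dvec * V)
    (q : Fin d → ℝ) (hq : ∀ j, q j = ∑ i, |V.mulVec (p i) j|)
    (Ind : Finset (Fin d)) (hcard : Ind.card = d - k)
    (hmin : ∀ j ∈ Ind, ∀ j' ∉ Ind, q j ≤ q j')
    (ζ : Fin d → ℝ) (hζ : ∀ j : Fin d, ζ j = if j ∈ Ind then 1 else 0)
    (E : Matrix (Fin d) (Fin d) ℝ) (hE : E = Vᵀ * Matrix.diagonal ζ * V) :
    ∑ i, l2norm (E.mulVec (p i))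
      ≤ Real.sqrt d * sInf {r : ℝ | ∃ X : Matrix (Fin d) (Fin d) ℝ,
          X * X = X ∧ Xᵀ = X ∧ X.rank = d - k ∧ r = ∑ i, l2norm (X.mulVec (p i))} := by
  obtain rfl : ζ = fun j => if j ∈ Ind then 1 else 0 := funext hζ
  subst hE hdecomp
  have hD0 := nonneg_of_posSemidef_conj_diagonal hV hpsd
  have hD1 := le_one_of_posSemidef_one_sub_conj_diagonal hV hpsd'
  have hDsum : ∑ j, Dvec j = #Ind := by rw [← trace_conj_diagonal hV, htr, hcard]
  have hE_mem : ∑ i, l2norm ((Vᵀ * diagonal (fun j => if j ∈ Ind then 1 else 0) * V) *ᵥ p i)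
      ∈ ksmValues p (d - k) := by
    refine ⟨_, isIdempotentElem_conj_diagonal hV ?_, transpose_conj_diagonal V _, ?_, rfl⟩
    · ext j; simp
    · rw [rank_conj_diagonal hV, ← hcard]; simp
  calc _ ≤ ∑ i, ∑ j ∈ Ind, |(V *ᵥ p i) j| :=
        sum_le_sum fun i _ => l2norm_conj_indicator_mulVec_le hV Ind (p i)
    _ = ∑ j ∈ Ind, q j := by rw [sum_comm]; simp only [hq]
    _ ≤ ∑ j, Dvec j * q j := sum_le_sum_mul_of_sum_eq_card hD0 hD1 hDsum hmin
    _ = ∑ i, ∑ j, Dvec j * |(V *ᵥ p i) j| := by simp only [hq, mul_sum]; exact sum_comm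
    _ ≤ √d * ∑ i, l2norm ((Vᵀ * diagonal Dvec * V) *ᵥ p i) := by
        rw [mul_sum]
        exact sum_le_sum fun i _ => sum_mul_abs_le_sqrt_mul_l2norm_conj_diagonal hV hD0 (p i)
    _ ≤ _ := by
        rw [hopt]
        exact mul_le_mul_of_nonneg_left (sInf_relaxksmValues_le ⟨_, hE_mem⟩) (Real.sqrt_nonneg _)

/-- If `(X*, (‖X* pᵢ‖₂)ᵢ)` attains the infimum `relaxksm(P,k)` of the
relaxed problem, `X* = Vᵀ D V` is a spectral decomposition, `q` is the vector of
coordinatewise sums of `|(V pᵢ)ⱼ|`, `ζ` the indicator of a set of indices of the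
`d - k` smallest entries of `q`, and `E := Vᵀ diag(ζ) V`, then
`∑ᵢ ‖E pᵢ‖₂ ≤ √d · ksm(P,k)`. -/
theorem stmt_7 (n d k : ℕ) (hn : 1 ≤ n) (hd : 2 ≤ d) (hk1 : 1 ≤ k) (hk2 : k ≤ d - 1)
    (p : Fin n → Fin d → ℝ)
    (Xstar : Matrix (Fin d) (Fin d) ℝ)
    (hsym : Xstarᵀ = Xstar) (htr : Xstar.trace = ((d - k : ℕ) : ℝ))
    (hpsd : Xstar.PosSemidef) (hpsd' : (1 - Xstar).PosSemidef)
    (hopt : ∑ i, l2norm (Xstar.mulVec (p i))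
      = sInf {r : ℝ | ∃ (X : Matrix (Fin d) (Fin d) ℝ) (y : Fin n → ℝ),
          Xᵀ = X ∧ X.trace = ((d - k : ℕ) : ℝ) ∧ X.PosSemidef ∧ (1 - X).PosSemidef ∧
          (∀ i, l2norm (X.mulVec (p i)) ≤ y i) ∧ r = ∑ i, y i})
    (V : Matrix (Fin d) (Fin d) ℝ) (hV : Vᵀ * V = 1)
    (Dvec : Fin d → ℝ) (hdecomp : Xstar = Vᵀ * Matrix.diagonal Dvec * V)
    (q : Fin d → ℝ) (hq : ∀ j, q j = ∑ i, |V.mulVec (p i) j|)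
    (Ind : Finset (Fin d)) (hcard : Ind.card = d - k)
    (hmin : ∀ j ∈ Ind, ∀ j' ∉ Ind, q j ≤ q j')
    (ζ : Fin d → ℝ) (hζ : ∀ j : Fin d, ζ j = if j ∈ Ind then 1 else 0)
    (E : Matrix (Fin d) (Fin d) ℝ) (hE : E = Vᵀ * Matrix.diagonal ζ * V) :
    ∑ i, l2norm (E.mulVec (p i))
      ≤ Real.sqrt d * sInf {r : ℝ | ∃ X : Matrix (Fin d) (Fin d) ℝ,
          X * X = X ∧ Xᵀ = X ∧ X.rank = d - k ∧ r = ∑ i, l2norm (X.mulVec (p i))} :=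
  stmt_7_general n d k p Xstar htr hpsd hpsd' hopt V hV Dvec hdecomp q hq Ind hcard hmin ζ hζ E hE
end

section
/- Let n ≥ 1, d ≥ 2 and k ∈ {1,…,d−1} be integers, let p₁,…,pₙ ∈ ℝ^d, and let t > 1. Define the barrier objective G_t(X,y) := t·∑_{i=1}^n yᵢ − ∑_{i=1}^n ln(yᵢ² − ‖X pᵢ‖₂²) − ln det(X) − ln det(I_d − X) on the domain D of pairs (X,y) with X ∈ ℝ^{d×d} symmetric, trace(X) = d−k, 0 ≺ X ≺ I_d, and ‖X pᵢ‖₂ < yᵢ for every i. Suppose (X*, y*) ∈ D attains the infimum of G_t over D. Then for every (X,y) ∈ D, (t − 1)·∑_{i=1}^n y*ᵢ ≤ G_t(X, y). In particular, taking X₀ := ((d−k)/d)·I_d and y₀ with (y₀)ᵢ := √(‖X₀ pᵢ‖₂² + e), one obtains (t − 1)·∑_{i=1}^n y*ᵢ ≤ t·∑_{i=1}^n (y₀)ᵢ − n + 2d·ln d. -/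
/-!
Since `log x ≤ x - 1` on eigenvalues, `log det A ≤ trace A - d` for `A ≻ 0`; applied to `X` and
`I - X` the two traces cancel, so `-log det X - log det (I - X) ≥ d ≥ 0`. Together with
`ln (yᵢ² - ‖X pᵢ‖²) ≤ ln yᵢ² ≤ yᵢ` this gives `G_t(X, y) ≥ (t - 1)·∑ yᵢ` on all of `D`, in
particular at the minimiser. At `X₀ = c·I` with `c = (d - k)/d` every logarithm in `G_t` is
explicit, and `c (1 - c) = (d - k) k / d² ≥ 1 / d²` yields the bound `2d ln d`.
-/

open Matrix

/-- The barrier objective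
`G_t(X,y) = t·∑ᵢ yᵢ − ∑ᵢ ln(yᵢ² − ‖X pᵢ‖₂²) − ln det X − ln det (I − X)`. -/
noncomputable def barrierG {n d : ℕ} (p : Fin n → Fin d → ℝ) (t : ℝ)
    (X : Matrix (Fin d) (Fin d) ℝ) (y : Fin n → ℝ) : ℝ :=
  t * ∑ i, y i - ∑ i, Real.log ((y i) ^ 2 - (l2norm (X.mulVec (p i))) ^ 2)
    - Real.log X.det - Real.log (1 - X).det

/-- The domain `D` of the barrier problem: `X` symmetric with `trace X = d − k`,
`0 ≺ X ≺ I`, and `‖X pᵢ‖₂ < yᵢ` for every `i`. -/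
def barrierDom {n d : ℕ} (k : ℕ) (p : Fin n → Fin d → ℝ)
    (X : Matrix (Fin d) (Fin d) ℝ) (y : Fin n → ℝ) : Prop :=
  Xᵀ = X ∧ X.trace = ((d - k : ℕ) : ℝ) ∧ X.PosDef ∧ (1 - X).PosDef ∧
    ∀ i, l2norm (X.mulVec (p i)) < y i

lemma Matrix.PosDef.log_det_le_trace_sub_card {ι : Type*} [Fintype ι] [DecidableEq ι]
    {A : Matrix ι ι ℝ} (hA : A.PosDef) :
    Real.log A.det ≤ A.trace - Fintype.card ι := by
  have hpos : ∀ i, 0 < hA.1.eigenvalues i := hA.eigenvalues_pos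
  rw [hA.1.det_eq_prod_eigenvalues, hA.1.trace_eq_sum_eigenvalues]
  simp only [RCLike.ofReal_real_eq_id, id_eq]
  rw [Real.log_prod fun i _ => (hpos i).ne']
  calc ∑ i, Real.log (hA.1.eigenvalues i) ≤ ∑ i, (hA.1.eigenvalues i - 1) :=
        Finset.sum_le_sum fun i _ => Real.log_le_sub_one_of_pos (hpos i)
    _ = ∑ i, hA.1.eigenvalues i - Fintype.card ι := by simp [Finset.sum_sub_distrib]

lemma Matrix.PosDef.log_det_add_log_det_one_sub_le {ι : Type*} [Fintype ι] [DecidableEq ι]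
    {X : Matrix ι ι ℝ} (hX : X.PosDef) (hX' : (1 - X).PosDef) :
    Real.log X.det + Real.log (1 - X).det ≤ -Fintype.card ι := by
  have h := hX.log_det_le_trace_sub_card
  have h' := hX'.log_det_le_trace_sub_card
  rw [trace_sub, trace_one] at h'
  linarith

lemma Real.log_sq_sub_sq_le {s y : ℝ} (hs : 0 ≤ s) (hsy : s < y) :
    Real.log (y ^ 2 - s ^ 2) ≤ y := by
  have hy : 0 < y := hs.trans_lt hsy
  have hsqrt : 0 < √y := Real.sqrt_pos.2 hy
  have hlog_sqrt : Real.log √y ≤ √y - 1 := Real.log_le_sub_one_of_pos hsqrt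
  calc Real.log (y ^ 2 - s ^ 2) ≤ Real.log (y ^ 2) :=
        Real.log_le_log (by nlinarith) (by nlinarith)
    _ = 4 * Real.log √y := by rw [Real.log_pow, Real.log_sqrt hy.le]; push_cast; ring
    _ ≤ y := by nlinarith [sq_nonneg (√y - 2), Real.sq_sqrt hy.le]

lemma l2norm_nonneg {d : ℕ} (u : Fin d → ℝ) : 0 ≤ l2norm u := Real.sqrt_nonneg _

lemma sub_one_mul_sum_le_barrierG {n d k : ℕ} {p : Fin n → Fin d → ℝ} (t : ℝ)
    {X : Matrix (Fin d) (Fin d) ℝ} {y : Fin n → ℝ} (h : barrierDom k p X y) :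
    (t - 1) * ∑ i, y i ≤ barrierG p t X y := by
  obtain ⟨-, -, hX, hX', hy⟩ := h
  have hdet := hX.log_det_add_log_det_one_sub_le hX'
  have hlog : ∑ i, Real.log (y i ^ 2 - l2norm (X *ᵥ p i) ^ 2) ≤ ∑ i, y i :=
    Finset.sum_le_sum fun i _ => Real.log_sq_sub_sq_le (l2norm_nonneg _) (hy i)
  have hcard : (0 : ℝ) ≤ Fintype.card (Fin d) := Nat.cast_nonneg _
  unfold barrierG
  linarith

lemma barrierG_of_sq_eq {n d : ℕ} (p : Fin n → Fin d → ℝ) (t : ℝ)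
    (X : Matrix (Fin d) (Fin d) ℝ) {y : Fin n → ℝ}
    (hy : ∀ i, y i ^ 2 = l2norm (X *ᵥ p i) ^ 2 + Real.exp 1) :
    barrierG p t X y = t * ∑ i, y i - n - Real.log X.det - Real.log (1 - X).det := by
  simp [barrierG, hy]

lemma log_det_smul_one {d : ℕ} (c : ℝ) :
    Real.log ((c • 1 : Matrix (Fin d) (Fin d) ℝ)).det = d * Real.log c := by
  rw [det_smul, det_one, mul_one, Fintype.card_fin, Real.log_pow]

lemma Matrix.one_sub_smul_one {ι : Type*} [Fintype ι] [DecidableEq ι] (c : ℝ) :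
    (1 : Matrix ι ι ℝ) - c • 1 = (1 - c) • 1 := by
  rw [sub_smul, one_smul]

lemma barrierDom_smul_one {n d k : ℕ} (hk1 : 1 ≤ k) (hk2 : k ≤ d - 1)
    (p : Fin n → Fin d → ℝ) {y : Fin n → ℝ}
    (hy : ∀ i, l2norm (((((d : ℝ) - k) / d) • (1 : Matrix (Fin d) (Fin d) ℝ)) *ᵥ p i) < y i) :
    barrierDom k p ((((d : ℝ) - k) / d) • (1 : Matrix (Fin d) (Fin d) ℝ)) y := by
  have hkd : (k : ℝ) + 1 ≤ d := by exact_mod_cast (Nat.le_sub_iff_add_le (by omega)).1 hk2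
  have hk : (1 : ℝ) ≤ k := by exact_mod_cast hk1
  have hd : (0 : ℝ) < d := by linarith
  have hc : 0 < ((d : ℝ) - k) / d := div_pos (by linarith) hd
  refine ⟨by simp, ?_, PosDef.one.smul hc, ?_, hy⟩
  · rw [trace_smul, trace_one, Fintype.card_fin, Nat.cast_sub (by omega), smul_eq_mul]
    field_simp
  · rw [one_sub_smul_one, one_sub_div hd.ne', sub_sub_cancel]
    exact PosDef.one.smul (div_pos (by linarith) hd)

lemma log_det_smul_one_add_log_det_one_sub_smul_one_ge {d k : ℕ} (hk1 : 1 ≤ k) (hk2 : k ≤ d - 1) :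
    -(2 * d * Real.log d) ≤
      Real.log ((((d : ℝ) - k) / d) • (1 : Matrix (Fin d) (Fin d) ℝ)).det +
        Real.log (1 - (((d : ℝ) - k) / d) • (1 : Matrix (Fin d) (Fin d) ℝ)).det := by
  have hkd : (k : ℝ) + 1 ≤ d := by exact_mod_cast (Nat.le_sub_iff_add_le (by omega)).1 hk2
  have hk : (1 : ℝ) ≤ k := by exact_mod_cast hk1
  have hd : (d : ℝ) ≠ 0 := by linarith
  rw [one_sub_smul_one, one_sub_div hd, sub_sub_cancel, log_det_smul_one, log_det_smul_one,
    Real.log_div (by linarith) hd, Real.log_div (by positivity) hd]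
  nlinarith [Real.log_nonneg (by linarith : (1 : ℝ) ≤ d - k), Real.log_nonneg hk]

theorem stmt_14_general (n d k : ℕ) (hk1 : 1 ≤ k) (hk2 : k ≤ d - 1)
    (p : Fin n → Fin d → ℝ) (t : ℝ)
    (Xstar : Matrix (Fin d) (Fin d) ℝ) (ystar : Fin n → ℝ)
    (hfeas : barrierDom k p Xstar ystar)
    (hmin : ∀ (X : Matrix (Fin d) (Fin d) ℝ) (y : Fin n → ℝ),
      barrierDom k p X y → barrierG p t Xstar ystar ≤ barrierG p t X y)
    (X₀ : Matrix (Fin d) (Fin d) ℝ)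
    (hX₀ : X₀ = (((d : ℝ) - k) / d) • (1 : Matrix (Fin d) (Fin d) ℝ))
    (y₀ : Fin n → ℝ)
    (hy₀ : ∀ i, y₀ i = Real.sqrt ((l2norm (X₀.mulVec (p i))) ^ 2 + Real.exp 1)) :
    (∀ (X : Matrix (Fin d) (Fin d) ℝ) (y : Fin n → ℝ),
      barrierDom k p X y → (t - 1) * ∑ i, ystar i ≤ barrierG p t X y) ∧
    (t - 1) * ∑ i, ystar i
      ≤ t * ∑ i, y₀ i - (n : ℝ) + 2 * (d : ℝ) * Real.log d := by
  have lower : ∀ X y, barrierDom k p X y → (t - 1) * ∑ i, ystar i ≤ barrierG p t X y :=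
    fun X y h => (sub_one_mul_sum_le_barrierG t hfeas).trans (hmin X y h)
  refine ⟨lower, ?_⟩
  have hy₀_sq : ∀ i, y₀ i ^ 2 = l2norm (X₀ *ᵥ p i) ^ 2 + Real.exp 1 := fun i => by
    rw [hy₀ i, Real.sq_sqrt (by positivity)]
  have hdom₀ : barrierDom k p X₀ y₀ := by
    subst hX₀
    refine barrierDom_smul_one hk1 hk2 p fun i => ?_
    rw [← Real.sqrt_sq (l2norm_nonneg _), hy₀ i]
    exact Real.sqrt_lt_sqrt (sq_nonneg _) (by linarith [Real.exp_pos 1])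
  have hlog := log_det_smul_one_add_log_det_one_sub_smul_one_ge hk1 hk2
  rw [← hX₀] at hlog
  calc (t - 1) * ∑ i, ystar i ≤ barrierG p t X₀ y₀ := lower X₀ y₀ hdom₀
    _ = t * ∑ i, y₀ i - n - Real.log X₀.det - Real.log (1 - X₀).det :=
      barrierG_of_sq_eq p t X₀ hy₀_sq
    _ ≤ t * ∑ i, y₀ i - n + 2 * d * Real.log d := by linarith

/-- If `t > 1` and `(X*, y*) ∈ D` attains the infimum of `G_t` over `D`,
then for every `(X,y) ∈ D`, `(t−1)·∑ᵢ y*ᵢ ≤ G_t(X,y)`; in particular, with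
`X₀ := ((d−k)/d)·I` and `(y₀)ᵢ := √(‖X₀ pᵢ‖₂² + e)` one obtains
`(t−1)·∑ᵢ y*ᵢ ≤ t·∑ᵢ (y₀)ᵢ − n + 2d·ln d`. -/
theorem stmt_14 (n d k : ℕ) (hn : 1 ≤ n) (hd : 2 ≤ d) (hk1 : 1 ≤ k) (hk2 : k ≤ d - 1)
    (p : Fin n → Fin d → ℝ) (t : ℝ) (ht : 1 < t)
    (Xstar : Matrix (Fin d) (Fin d) ℝ) (ystar : Fin n → ℝ)
    (hfeas : barrierDom k p Xstar ystar)
    (hmin : ∀ (X : Matrix (Fin d) (Fin d) ℝ) (y : Fin n → ℝ),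
      barrierDom k p X y → barrierG p t Xstar ystar ≤ barrierG p t X y)
    (X₀ : Matrix (Fin d) (Fin d) ℝ)
    (hX₀ : X₀ = (((d : ℝ) - k) / d) • (1 : Matrix (Fin d) (Fin d) ℝ))
    (y₀ : Fin n → ℝ)
    (hy₀ : ∀ i, y₀ i = Real.sqrt ((l2norm (X₀.mulVec (p i))) ^ 2 + Real.exp 1)) :
    (∀ (X : Matrix (Fin d) (Fin d) ℝ) (y : Fin n → ℝ),
      barrierDom k p X y → (t - 1) * ∑ i, ystar i ≤ barrierG p t X y) ∧
    (t - 1) * ∑ i, ystar i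
      ≤ t * ∑ i, y₀ i - (n : ℝ) + 2 * (d : ℝ) * Real.log d :=
  stmt_14_general n d k hk1 hk2 p t Xstar ystar hfeas hmin X₀ hX₀ y₀ hy₀
end
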